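/- Let {H_n} be a Positive Linear Recurrence Sequence with length L and size S. For n > 2L, 0 ≤ t < S, and every ω ∈ Ω_n with Z_n(ω) = t, the number of summands satisfies K_n(ω) = K_{n−ℓ(t)}(h_t(ω)) + t, where h_t(ω) ∈ Ω_{n−ℓ(t)} is the legal decomposition obtained by removing the second-to-last block of ω. -/

import Mathlib

open scoped BigOperators
open Filter

/-- A Positive Linear Recurrence Sequence (PLRS): a sequence `H` of positive integers
satisfying `H (n+1) = c 1 * H n + ⋯ + c L * H (n+1-L)` for `n ≥ L`, with
`H 1 = 1` and initial conditions `H (n+1) = c 1 * H n + ⋯ + c n * H 1 + 1` for `1 ≤ n < L`. -/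
structure PLRS where
  /-- the length of the recurrence -/
  L : ℕ
  /-- the coefficients of the recurrence (indexed from 1) -/
  c : ℕ → ℕ
  /-- the sequence itself (indexed from 1) -/
  H : ℕ → ℕ
  L_pos : 0 < L
  c1_pos : 0 < c 1
  cL_pos : 0 < c L
  H_pos : ∀ n, 1 ≤ n → 0 < H n
  H_one : H 1 = 1
  H_rec : ∀ n, L ≤ n → H (n + 1) = ∑ i ∈ Finset.Icc 1 L, c i * H (n + 1 - i)
  H_init : ∀ n, 1 ≤ n → n < L → H (n + 1) = (∑ i ∈ Finset.Icc 1 n, c i * H (n + 1 - i)) + 1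

namespace PLRS

/-- The size `S = c 1 + ⋯ + c L` of a PLRS. -/
def size (P : PLRS) : ℕ := ∑ i ∈ Finset.Icc 1 P.L, P.c i

/-- Legality of a coefficient sequence `(a_1, …, a_m)` (as a list), not including the
requirement `a_1 > 0`: either (Condition 1) `m < L` and `a_i = c_i` for all `i`, or
(Condition 2) there is `s ∈ {1, …, L}` with `a_1 = c_1, …, a_{s-1} = c_{s-1}`, `a_s < c_s`,
and `(a_{s+1}, …, a_m)` legal (possibly empty). -/
inductive IsLegal (P : PLRS) : List ℕ → Prop
  | cond1 (m : ℕ) (h1 : 1 ≤ m) (h2 : m < P.L) :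
      IsLegal P ((List.range m).map fun i => P.c (i + 1))
  | cond2 (s : ℕ) (hs1 : 1 ≤ s) (hs2 : s ≤ P.L) (a : ℕ) (ha : a < P.c s)
      (rest : List ℕ) (hrest : IsLegal P rest) :
      IsLegal P (((List.range (s - 1)).map fun i => P.c (i + 1)) ++ a :: rest)
  | cond2_last (s : ℕ) (hs1 : 1 ≤ s) (hs2 : s ≤ P.L) (a : ℕ) (ha : a < P.c s) :
      IsLegal P (((List.range (s - 1)).map fun i => P.c (i + 1)) ++ [a])

/-- A legal decomposition: a legal coefficient sequence with `a_1 > 0`. -/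
def LegalDecomp (P : PLRS) (l : List ℕ) : Prop := P.IsLegal l ∧ 0 < l.headI

/-- The value `∑_{i=1}^m a_i H_{m+1-i}` of a coefficient sequence `(a_1, …, a_m)`. -/
def value (P : PLRS) (l : List ℕ) : ℕ :=
  ∑ i ∈ Finset.range l.length, l.getD i 0 * P.H (l.length - i)

/-- `Ω_n`: the set of legal decompositions of integers in `[H_n, H_{n+1})`. -/
def Omega (P : PLRS) (n : ℕ) : Set (List ℕ) :=
  {l | P.LegalDecomp l ∧ P.H n ≤ P.value l ∧ P.value l < P.H (n + 1)}

/-- Expectation of `g` under the uniform probability measure on a (finite) set `A`. -/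
noncomputable def expectOn (A : Set (List ℕ)) (g : List ℕ → ℝ) : ℝ :=
  (∑ᶠ l ∈ A, g l) / (A.ncard : ℝ)

/-- Variance of `g` under the uniform probability measure on a (finite) set `A`. -/
noncomputable def varOn (A : Set (List ℕ)) (g : List ℕ → ℝ) : ℝ :=
  expectOn A (fun l => g l ^ 2) - (expectOn A g) ^ 2

/-- Expectation of `g` under the uniform probability measure on `Ω_n`. -/
noncomputable def expect (P : PLRS) (n : ℕ) (g : List ℕ → ℝ) : ℝ := expectOn (P.Omega n) g

/-- Probability of the event `A` under the uniform probability measure on `Ω_n`. -/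
noncomputable def prob (P : PLRS) (n : ℕ) (A : Set (List ℕ)) : ℝ :=
  ((P.Omega n ∩ A).ncard : ℝ) / ((P.Omega n).ncard : ℝ)

/-- `E[K_n]`, the expected number of summands on `Ω_n`. -/
noncomputable def expectK (P : PLRS) (n : ℕ) : ℝ := P.expect n fun l => (l.sum : ℝ)

/-- `Var[K_n]`, the variance of the number of summands on `Ω_n`. -/
noncomputable def varK (P : PLRS) (n : ℕ) : ℝ := varOn (P.Omega n) fun l => (l.sum : ℝ)

/-- The first index (0-based) at which the coefficient list disagrees with `c`. -/
def firstMismatch (P : PLRS) (l : List ℕ) : Option ℕ :=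
  (List.range l.length).find? fun i => l.getD i 0 != P.c (i + 1)

/-- The block decomposition of a legal coefficient sequence: repeatedly split off the
Type 2 block `(c_1, …, c_{s-1}, a_s)` with `a_s ≠ c_s`; if the whole remaining sequence
agrees with `c` it is a single (Type 1) block. -/
def blocks (P : PLRS) (l : List ℕ) : List (List ℕ) :=
  if h : l = [] then []
  else
    match P.firstMismatch l with
    | none => [l]
    | some i => l.take (i + 1) :: P.blocks (l.drop (i + 1))
termination_by l.length
decreasing_by
  have hl : 0 < l.length := List.length_pos_iff.mpr h
  simp only [List.length_drop]
  omega

/-- The second-to-last block of a legal decomposition. -/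
def stlBlock (P : PLRS) (l : List ℕ) : List ℕ := ((P.blocks l).reverse).getD 1 []

/-- `Z_n(ω)`: the size (sum of coefficients) of the second-to-last block. -/
def Z (P : PLRS) (l : List ℕ) : ℕ := (P.stlBlock l).sum

/-- The length function `ℓ(t)`: the length of the Type 2 block of size `t`, i.e., the least
`s` with `t < c_1 + ⋯ + c_s`. -/
noncomputable def ell (P : PLRS) (t : ℕ) : ℕ :=
  sInf {s : ℕ | t < ∑ i ∈ Finset.Icc 1 s, P.c i}

/-- `L_n(ω) = ℓ(Z_n(ω))`: the length of the second-to-last block. -/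
noncomputable def Lfn (P : PLRS) (l : List ℕ) : ℕ := P.ell (P.Z l)

/-- `h_t`: remove the second-to-last block of a legal decomposition. -/
def removeSTL (P : PLRS) (l : List ℕ) : List ℕ :=
  ((((P.blocks l).reverse).eraseIdx 1).reverse).flatten

/-- The Type 2 block of size `t`: `(c_1, …, c_{ℓ(t)-1}, t - (c_1 + ⋯ + c_{ℓ(t)-1}))`. -/
noncomputable def type2Block (P : PLRS) (t : ℕ) : List ℕ :=
  ((List.range (P.ell t - 1)).map fun i => P.c (i + 1)) ++
    [t - ∑ i ∈ Finset.Icc 1 (P.ell t - 1), P.c i]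

/-- Insert the Type 2 block of size `t` immediately before the last block. -/
noncomputable def insertSTL (P : PLRS) (t : ℕ) (l : List ℕ) : List ℕ :=
  ((((P.blocks l).reverse).insertIdx 1 (P.type2Block t)).reverse).flatten

/-- A Type 1 block: `(c_1, …, c_m)` with `1 ≤ m < L`. -/
def IsType1Block (P : PLRS) (bl : List ℕ) : Prop :=
  ∃ m, 1 ≤ m ∧ m < P.L ∧ bl = (List.range m).map fun i => P.c (i + 1)

/-- A Type 2 block: `(c_1, …, c_{s-1}, a)` with `1 ≤ s ≤ L` and `a < c_s`. -/
def IsType2Block (P : PLRS) (bl : List ℕ) : Prop :=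
  ∃ s, 1 ≤ s ∧ s ≤ P.L ∧ ∃ a, a < P.c s ∧
    bl = ((List.range (s - 1)).map fun i => P.c (i + 1)) ++ [a]

/-- Conditional expectation of `g` on `Ω_n` given `Z_n = t`. -/
noncomputable def condExpect (P : PLRS) (n t : ℕ) (g : List ℕ → ℝ) : ℝ :=
  expectOn (P.Omega n ∩ {l | P.Z l = t}) g

end PLRS

/-!
A legal sequence of length `m` with positive leading coefficient has value in `[H_m, H_{m+1})`:
a leading block `(c_1, …, c_{s-1}, a)` with `a < c_s` contributes at most
`c_1 H_m + ⋯ + c_s H_{m+1-s} - H_{m+1-s} ≤ H_{m+1} - H_{m+1-s}`, and the rest is below `H_{m+1-s}`.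
Hence `Ω_n` consists exactly of the legal decompositions with `n` entries.
The blocks of such a decomposition are Type 2 blocks followed by one final block, each of length
at most `L`, so for `n > 2L` there are at least three of them. Deleting the second-to-last block,
of size `t` and length `ℓ(t)`, leaves a concatenation of the same shape with the same leading
coefficient: a legal decomposition with `n - ℓ(t)` entries and `t` fewer summands.
-/

lemma Finset.sum_Icc_one_eq_sum_Icc_sub_one_add {M : Type*} [AddCommMonoid M] (f : ℕ → M)
    {s : ℕ} (hs : 1 ≤ s) : ∑ i ∈ Finset.Icc 1 s, f i = ∑ i ∈ Finset.Icc 1 (s - 1), f i + f s := by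
  obtain ⟨k, rfl⟩ : ∃ k, s = k + 1 := ⟨s - 1, by omega⟩
  rw [Finset.sum_Icc_succ_top (by omega), Nat.add_sub_cancel]

lemma List.headI_append_of_ne_nil {α : Type*} [Inhabited α] {l₁ : List α} (l₂ : List α)
    (h : l₁ ≠ []) : (l₁ ++ l₂).headI = l₁.headI := by
  obtain ⟨x, xs, rfl⟩ := List.exists_cons_of_ne_nil h
  rfl

namespace PLRS

variable (P : PLRS)

def cPrefix (k : ℕ) : List ℕ := (List.range k).map fun i => P.c (i + 1)

@[simp]
lemma length_cPrefix (k : ℕ) : (P.cPrefix k).length = k := by simp [cPrefix]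

lemma getD_cPrefix {k i : ℕ} (h : i < k) : (P.cPrefix k).getD i 0 = P.c (i + 1) := by
  simp [cPrefix, h]

lemma sum_cPrefix (k : ℕ) : (P.cPrefix k).sum = ∑ i ∈ Finset.Icc 1 k, P.c i := by
  induction k with
  | zero => simp [cPrefix]
  | succ k ih =>
    rw [Finset.sum_Icc_succ_top (by omega), ← ih]
    simp [cPrefix, List.range_succ]

lemma value_cons (x : ℕ) (xs : List ℕ) :
    P.value (x :: xs) = x * P.H (xs.length + 1) + P.value xs := by
  rw [value, List.length_cons, Finset.sum_range_succ', add_comm]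
  simp [value]

lemma value_append (l₁ l₂ : List ℕ) :
    P.value (l₁ ++ l₂) =
      ∑ i ∈ Finset.range l₁.length, l₁.getD i 0 * P.H (l₁.length + l₂.length - i)
        + P.value l₂ := by
  induction l₁ with
  | nil => simp
  | cons x xs ih =>
    rw [List.cons_append, value_cons, ih, List.length_cons, Finset.sum_range_succ']
    simp only [List.getD_cons_succ, List.getD_cons_zero, List.length_append]
    have hshift : ∀ i, xs.length + 1 + l₂.length - (i + 1) = xs.length + l₂.length - i := by
      omega
    simp only [hshift, Nat.sub_zero]
    ring_nf

lemma value_cPrefix_append (k : ℕ) (rest : List ℕ) :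
    P.value (P.cPrefix k ++ rest) =
      ∑ i ∈ Finset.Icc 1 k, P.c i * P.H (k + rest.length + 1 - i) + P.value rest := by
  rw [value_append, length_cPrefix, ← Finset.Ico_add_one_right_eq_Icc,
    Finset.sum_Ico_eq_sum_range, Nat.add_sub_cancel]
  congr 1
  refine Finset.sum_congr rfl fun i hi => ?_
  rw [P.getD_cPrefix (Finset.mem_range.mp hi)]
  congr 2 <;> omega

lemma sum_c_mul_H_le {m s : ℕ} (hs1 : 1 ≤ s) (hsL : s ≤ P.L) (hsm : s ≤ m) :
    ∑ i ∈ Finset.Icc 1 s, P.c i * P.H (m + 1 - i) ≤ P.H (m + 1) := by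
  rcases lt_or_ge m P.L with h | h
  · calc ∑ i ∈ Finset.Icc 1 s, P.c i * P.H (m + 1 - i)
        ≤ ∑ i ∈ Finset.Icc 1 m, P.c i * P.H (m + 1 - i) :=
          Finset.sum_le_sum_of_subset (Finset.Icc_subset_Icc le_rfl hsm)
      _ ≤ P.H (m + 1) := by rw [P.H_init m (hs1.trans hsm) h]; omega
  · rw [P.H_rec m h]
    exact Finset.sum_le_sum_of_subset (Finset.Icc_subset_Icc le_rfl hsL)

lemma H_le_H_succ {m : ℕ} (hm : 1 ≤ m) : P.H m ≤ P.H (m + 1) := by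
  have h := P.sum_c_mul_H_le le_rfl P.L_pos hm
  simp only [Finset.Icc_self, Finset.sum_singleton, Nat.add_sub_cancel] at h
  exact (Nat.le_mul_of_pos_left _ P.c1_pos).trans h

lemma H_mono {a b : ℕ} (ha : 1 ≤ a) (hab : a ≤ b) : P.H a ≤ P.H b := by
  induction b, hab using Nat.le_induction with
  | base => rfl
  | succ b hab ih => exact ih.trans (P.H_le_H_succ (ha.trans hab))

lemma value_cPrefix_append_lt {s a : ℕ} (rest : List ℕ) (hs1 : 1 ≤ s) (hsL : s ≤ P.L)
    (ha : a < P.c s) (hrest : P.value rest < P.H (rest.length + 1)) :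
    P.value (P.cPrefix (s - 1) ++ a :: rest) < P.H (s + rest.length + 1) := by
  have hblock := P.sum_c_mul_H_le hs1 hsL (m := s + rest.length) (by omega)
  rw [Finset.sum_Icc_one_eq_sum_Icc_sub_one_add _ hs1,
    show s + rest.length + 1 - s = rest.length + 1 by omega] at hblock
  rw [value_cPrefix_append, value_cons,
    show s - 1 + (a :: rest).length = s + rest.length by rw [List.length_cons]; omega]
  have ha' := Nat.mul_le_mul_right (P.H (rest.length + 1)) ha
  rw [Nat.succ_mul] at ha'
  omega

lemma value_lt_of_isLegal {l : List ℕ} (h : P.IsLegal l) : P.value l < P.H (l.length + 1) := by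
  induction h with
  | cond1 m h1 h2 =>
    have hval := P.value_cPrefix_append m []
    rw [List.append_nil] at hval
    change P.value (P.cPrefix m) < P.H ((P.cPrefix m).length + 1)
    rw [hval, length_cPrefix, P.H_init m h1 h2]
    simp [value]
  | cond2 s hs1 hs2 a ha rest _ ih =>
    change P.value (P.cPrefix (s - 1) ++ a :: rest) <
      P.H ((P.cPrefix (s - 1) ++ a :: rest).length + 1)
    convert P.value_cPrefix_append_lt rest hs1 hs2 ha ih using 3
    rw [List.length_append, length_cPrefix, List.length_cons]
    omega
  | cond2_last s hs1 hs2 a ha =>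
    change P.value (P.cPrefix (s - 1) ++ [a]) < P.H ((P.cPrefix (s - 1) ++ [a]).length + 1)
    convert P.value_cPrefix_append_lt [] hs1 hs2 ha (by simp [value, P.H_one]) using 3
    rw [List.length_append, length_cPrefix, List.length_singleton, List.length_nil]
    omega

lemma H_length_le_value {l : List ℕ} (hl : 0 < l.headI) : P.H l.length ≤ P.value l := by
  cases l with
  | nil => simp at hl
  | cons x xs =>
    rw [List.headI_cons] at hl
    rw [value_cons, List.length_cons]
    have := Nat.le_mul_of_pos_left (P.H (xs.length + 1)) hl
    omega

lemma mem_Omega_iff {l : List ℕ} {n : ℕ} : l ∈ P.Omega n ↔ P.LegalDecomp l ∧ l.length = n := by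
  constructor
  · rintro ⟨hdec, hlo, hhi⟩
    have hlt := P.value_lt_of_isLegal hdec.1
    have hge := P.H_length_le_value hdec.2
    refine ⟨hdec, le_antisymm ?_ ?_⟩
    · by_contra! h
      have := P.H_mono (a := n + 1) (b := l.length) (by omega) h
      omega
    · by_contra! h
      have := P.H_mono (a := l.length + 1) (b := n) (by omega) h
      omega
  · rintro ⟨hdec, rfl⟩
    exact ⟨hdec, P.H_length_le_value hdec.2, P.value_lt_of_isLegal hdec.1⟩

lemma firstMismatch_cPrefix (m : ℕ) : P.firstMismatch (P.cPrefix m) = none := by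
  rw [firstMismatch, List.find?_eq_none]
  intro i hi
  rw [List.mem_range, length_cPrefix] at hi
  rw [P.getD_cPrefix hi]
  simp

lemma firstMismatch_cPrefix_append {s a : ℕ} (rest : List ℕ) (hs : 1 ≤ s) (ha : a ≠ P.c s) :
    P.firstMismatch (P.cPrefix (s - 1) ++ a :: rest) = some (s - 1) := by
  rw [firstMismatch, List.find?_range_eq_some]
  refine ⟨?_, by simp, fun j hj => ?_⟩
  · rw [List.getD_append_right _ _ _ _ (by simp)]
    simpa [Nat.sub_add_cancel hs] using ha
  · rw [List.getD_append _ _ _ _ (by simpa using hj), P.getD_cPrefix hj]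
    simp

lemma blocks_cPrefix {m : ℕ} (hm : 1 ≤ m) : P.blocks (P.cPrefix m) = [P.cPrefix m] := by
  have hne : P.cPrefix m ≠ [] := List.ne_nil_of_length_pos (by rw [length_cPrefix]; omega)
  rw [blocks, dif_neg hne, P.firstMismatch_cPrefix]

lemma blocks_cPrefix_append {s a : ℕ} (rest : List ℕ) (hs : 1 ≤ s) (ha : a ≠ P.c s) :
    P.blocks (P.cPrefix (s - 1) ++ a :: rest) = (P.cPrefix (s - 1) ++ [a]) :: P.blocks rest := by
  rw [blocks, dif_neg (by simp), P.firstMismatch_cPrefix_append rest hs ha]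
  have hlen : (P.cPrefix (s - 1)).length ≤ s - 1 + 1 := by simp
  simp [List.take_append, List.drop_append, List.drop_eq_nil_of_le hlen]

lemma blocks_spec {l : List ℕ} (h : P.IsLegal l) :
    ∃ bs B, P.blocks l = bs ++ [B] ∧ (∀ b ∈ bs, P.IsType2Block b) ∧
      (P.IsType1Block B ∨ P.IsType2Block B) ∧ bs.flatten ++ B = l := by
  induction h with
  | cond1 m h1 h2 =>
    exact ⟨[], P.cPrefix m, P.blocks_cPrefix h1, by simp, Or.inl ⟨m, h1, h2, rfl⟩, rfl⟩
  | cond2 s hs1 hs2 a ha rest _ ih =>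
    obtain ⟨bs, B, hbl, hbs, hB, rfl⟩ := ih
    refine ⟨(P.cPrefix (s - 1) ++ [a]) :: bs, B, ?_, ?_, hB, by simp [cPrefix]⟩
    · exact (P.blocks_cPrefix_append _ hs1 ha.ne).trans (by rw [hbl]; rfl)
    · intro b hb
      rcases List.mem_cons.mp hb with rfl | hb
      exacts [⟨s, hs1, hs2, a, ha, rfl⟩, hbs b hb]
  | cond2_last s hs1 hs2 a ha =>
    refine ⟨[], P.cPrefix (s - 1) ++ [a], ?_, by simp, Or.inr ⟨s, hs1, hs2, a, ha, rfl⟩, rfl⟩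
    exact (P.blocks_cPrefix_append [] hs1 ha.ne).trans (by rw [blocks]; rfl)

variable {P}

lemma IsType1Block.isLegal {B : List ℕ} (h : P.IsType1Block B) : P.IsLegal B := by
  obtain ⟨m, h1, h2, rfl⟩ := h
  exact .cond1 m h1 h2

lemma IsType2Block.isLegal {B : List ℕ} (h : P.IsType2Block B) : P.IsLegal B := by
  obtain ⟨s, hs1, hsL, a, ha, rfl⟩ := h
  exact .cond2_last s hs1 hsL a ha

lemma IsType1Block.length_le {B : List ℕ} (h : P.IsType1Block B) : B.length ≤ P.L := by
  obtain ⟨m, -, h2, rfl⟩ := h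
  simp only [List.length_map, List.length_range]
  omega

lemma IsType2Block.length_le {B : List ℕ} (h : P.IsType2Block B) : B.length ≤ P.L := by
  obtain ⟨s, hs1, hsL, a, -, rfl⟩ := h
  simp only [List.length_append, List.length_map, List.length_range, List.length_singleton]
  omega

lemma IsType2Block.ell_sum {M : List ℕ} (h : P.IsType2Block M) : P.ell M.sum = M.length := by
  obtain ⟨s, hs1, -, a, ha, rfl⟩ := h
  change P.ell (P.cPrefix (s - 1) ++ [a]).sum = (P.cPrefix (s - 1) ++ [a]).length
  have hcs := Finset.sum_Icc_one_eq_sum_Icc_sub_one_add P.c hs1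
  rw [List.sum_append, sum_cPrefix, List.sum_singleton, List.length_append, length_cPrefix,
    List.length_singleton, Nat.sub_add_cancel hs1]
  have hmem : s ∈ {k | ∑ i ∈ Finset.Icc 1 (s - 1), P.c i + a < ∑ i ∈ Finset.Icc 1 k, P.c i} :=
    Set.mem_ofPred.mpr (by omega)
  refine le_antisymm (Nat.sInf_le hmem) (le_csInf ⟨s, hmem⟩ fun k hk => ?_)
  by_contra! hks
  have hmono : ∑ i ∈ Finset.Icc 1 k, P.c i ≤ ∑ i ∈ Finset.Icc 1 (s - 1), P.c i :=
    Finset.sum_le_sum_of_subset (Finset.Icc_subset_Icc le_rfl (by omega))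
  have := Set.mem_ofPred.mp hk
  omega

lemma isLegal_flatten_append {bs : List (List ℕ)} {B : List ℕ}
    (hbs : ∀ b ∈ bs, P.IsType2Block b) (hB : P.IsLegal B) : P.IsLegal (bs.flatten ++ B) := by
  induction bs with
  | nil => simpa using hB
  | cons b bs ih =>
    obtain ⟨s, hs1, hsL, a, ha, rfl⟩ := hbs b List.mem_cons_self
    have := IsLegal.cond2 s hs1 hsL a ha _ (ih fun b hb => hbs b (List.mem_cons_of_mem _ hb))
    simpa using this

variable (P)

lemma exists_blocks_eq_of_two_mul_L_lt {l : List ℕ} (h : P.IsLegal l) (hl : 2 * P.L < l.length) :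
    ∃ bs M B, P.blocks l = bs ++ [M, B] ∧ bs.flatten ≠ [] ∧ (∀ b ∈ bs, P.IsType2Block b) ∧
      P.IsType2Block M ∧ P.IsLegal B ∧ l = bs.flatten ++ (M ++ B) := by
  obtain ⟨bs, B, hbl, hbs, hB, rfl⟩ := P.blocks_spec h
  have hBlen : B.length ≤ P.L := hB.elim IsType1Block.length_le IsType2Block.length_le
  rcases List.eq_nil_or_concat bs with rfl | ⟨bs, M, rfl⟩
  · simp only [List.flatten_nil, List.nil_append] at hl
    omega
  · have hM : P.IsType2Block M := hbs M (by simp)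
    have hMlen := hM.length_le
    refine ⟨bs, M, B, by simpa using hbl, ?_, fun b hb => hbs b (by simp [hb]), hM,
      hB.elim IsType1Block.isLegal IsType2Block.isLegal, by simp⟩
    rw [← List.length_pos_iff]
    simp only [List.concat_eq_append, List.flatten_append, List.flatten_singleton,
      List.length_append] at hl
    omega

end PLRS

open PLRS

theorem summands_removeSTL_general (P : PLRS) (n t : ℕ) (hn : 2 * P.L < n)
    (l : List ℕ) (hl : l ∈ P.Omega n) (hz : P.Z l = t) :
    P.removeSTL l ∈ P.Omega (n - P.ell t) ∧ l.sum = (P.removeSTL l).sum + t := by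
  obtain ⟨⟨hleg, hpos⟩, rfl⟩ := P.mem_Omega_iff.mp hl
  obtain ⟨bs, M, B, hbl, hne, hbs, hM, hB, rfl⟩ := P.exists_blocks_eq_of_two_mul_L_lt hleg hn
  have hrem : P.removeSTL (bs.flatten ++ (M ++ B)) = bs.flatten ++ B := by
    simp [removeSTL, hbl]
  obtain rfl : t = M.sum := by simp [← hz, Z, stlBlock, hbl]
  rw [hrem, P.mem_Omega_iff, hM.ell_sum]
  refine ⟨⟨⟨P.isLegal_flatten_append hbs hB, ?_⟩, ?_⟩, ?_⟩
  · rwa [List.headI_append_of_ne_nil _ hne] at hpos ⊢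
  · simp only [List.length_append]
    omega
  · simp only [List.sum_append]
    omega

/-- For `n > 2L`, `0 ≤ t < S` and `ω ∈ Ω_n` with `Z_n ω = t`, we have
`h_t ω ∈ Ω_{n-ℓ(t)}` and `K_n ω = K_{n-ℓ(t)} (h_t ω) + t`. -/
theorem summands_removeSTL (P : PLRS) (n t : ℕ) (hn : 2 * P.L < n) (ht : t < P.size)
    (l : List ℕ) (hl : l ∈ P.Omega n) (hz : P.Z l = t) :
    P.removeSTL l ∈ P.Omega (n - P.ell t) ∧ l.sum = (P.removeSTL l).sum + t :=
  summands_removeSTL_general P n t hn l hl hz
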